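/- arXiv:2006.12002 — 4 statements merged into one kernel-verified Lean document; each statement's English description precedes it below -/
import Mathlib

section
/- Let G : ℕ → ZMod m be periodic with minimal period p, and let s be the additive order of SG_{p-1} = ∑_{k=0}^{p-1} G_k in ZMod m (with s = 1 if SG_{p-1} = 0). Then the partial sum sequence SG_n = ∑_{k=0}^n G_k has minimal period s · p. -/
/-!
Summing one period of `G` adds `SG_{p-1}`, so the partial sums satisfy
`SG_{n + t p} = SG_n + t • SG_{p-1}`; hence `s p` is a period of `SG`.
Conversely, a period `q` of `SG` is a period of `G` (differences of consecutive partial sums,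
and the periodicity of `G` repairs index `0`), so `p ∣ q` by minimality of `p`; writing
`q = t p`, the displayed identity forces `t • SG_{p-1} = 0`, i.e. `s ∣ t`.
-/

open Finset Function

namespace Function.Periodic

variable {α : Type*} {f : ℕ → α} {p q : ℕ}

theorem dvd_of_isLeast_period (hf : Periodic f p) (hp : 0 < p)
    (hmin : ∀ r, 0 < r → Periodic f r → p ≤ r) (hq : Periodic f q) : p ∣ q := by
  by_contra hpq
  have hmod_pos : 0 < q % p := Nat.pos_of_ne_zero (mt Nat.dvd_of_mod_eq_zero hpq)
  have hmod : Periodic f (q % p) := fun n =>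
    calc f (n + q % p) = f (n + q % p + q / p * p) := (hf.nat_mul _ _).symm
      _ = f (n + q) := by rw [add_assoc, Nat.mod_add_div']
      _ = f n := hq n
  exact absurd (hmin _ hmod_pos hmod) (not_le.2 (Nat.mod_lt q hp))

/-- A period of `f` on the indices `≥ 1` is a genuine period, given some positive period. -/
theorem of_add_one (hf : Periodic f p) (hp : 0 < p) (hq : ∀ n, f (n + 1 + q) = f (n + 1)) :
    Periodic f q := by
  obtain ⟨p', rfl⟩ := Nat.exists_eq_add_one_of_ne_zero hp.ne'
  intro n
  calc f (n + q) = f (n + q + (p' + 1)) := (hf _).symm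
    _ = f (n + p' + 1 + q) := by congr 1; omega
    _ = f (n + (p' + 1)) := hq _
    _ = f n := hf n

section AddCommMonoid

variable {M : Type*} [AddCommMonoid M] {f : ℕ → M}

theorem sum_range_add (hf : Periodic f p) (n : ℕ) :
    ∑ k ∈ range (n + p), f k = ∑ k ∈ range n, f k + ∑ k ∈ range p, f k := by
  rw [add_comm n p, Finset.sum_range_add, add_comm]
  simp only [add_comm p, show ∀ x, f (x + p) = f x from hf]

theorem sum_range_add_mul (hf : Periodic f p) (n t : ℕ) :
    ∑ k ∈ range (n + t * p), f k = ∑ k ∈ range n, f k + t • ∑ k ∈ range p, f k := by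
  induction t with
  | zero => simp
  | succ t ih => rw [add_one_mul, ← add_assoc, hf.sum_range_add, ih, add_assoc, succ_nsmul]

end AddCommMonoid

end Function.Periodic

theorem apply_add_one_add_eq_of_sum_range_succ_add_eq {M : Type*} [AddCancelCommMonoid M]
    {f : ℕ → M} {q : ℕ} (h : ∀ n, ∑ k ∈ range (n + q + 1), f k = ∑ k ∈ range (n + 1), f k) :
    ∀ n, f (n + 1 + q) = f (n + 1) := by
  intro n
  have hsucc := h (n + 1)
  rw [add_right_comm n 1 q, sum_range_succ, h n, sum_range_succ _ (n + 1)] at hsucc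
  rw [add_right_comm]
  exact add_left_cancel hsucc

theorem stmt_5_general (m : ℕ) (G : ℕ → ZMod m) (p : ℕ) (hp : 0 < p)
    (hper : ∀ n, G (n + p) = G n)
    (hmin : ∀ q, 0 < q → (∀ n, G (n + q) = G n) → p ≤ q)
    (s : ℕ) (hs : s = addOrderOf (∑ k ∈ Finset.range p, G k)) :
    (∀ n, ∑ k ∈ Finset.range (n + s * p + 1), G k = ∑ k ∈ Finset.range (n + 1), G k) ∧
    (∀ q, 0 < q → (∀ n, ∑ k ∈ Finset.range (n + q + 1), G k = ∑ k ∈ Finset.range (n + 1), G k) →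
      s * p ≤ q) := by
  have hG : Periodic G p := hper
  refine ⟨fun n => ?_, fun q hq hsum => ?_⟩
  · rw [add_right_comm, hG.sum_range_add_mul, hs, addOrderOf_nsmul_eq_zero, add_zero]
  · have hGq : Periodic G q := hG.of_add_one hp (apply_add_one_add_eq_of_sum_range_succ_add_eq hsum)
    obtain ⟨t, rfl⟩ := hG.dvd_of_isLeast_period hp hmin hGq
    have ht : 0 < t := Nat.pos_of_mul_pos_left hq
    have htS : t • ∑ k ∈ range p, G k = 0 := by
      obtain ⟨p', rfl⟩ := Nat.exists_eq_add_one_of_ne_zero hp.ne'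
      have h := hsum p'
      rw [add_right_comm, mul_comm, hG.sum_range_add_mul] at h
      exact add_eq_left.mp h
    rw [mul_comm p t]
    exact Nat.mul_le_mul_right p (hs ▸ Nat.le_of_dvd ht (addOrderOf_dvd_of_nsmul_eq_zero htS))

theorem stmt_5 (m : ℕ) (hm : 2 ≤ m) (G : ℕ → ZMod m) (p : ℕ) (hp : 0 < p)
    (hper : ∀ n, G (n + p) = G n)
    (hmin : ∀ q, 0 < q → (∀ n, G (n + q) = G n) → p ≤ q)
    (s : ℕ) (hs : s = addOrderOf (∑ k ∈ Finset.range p, G k)) :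
    (∀ n, ∑ k ∈ Finset.range (n + s * p + 1), G k = ∑ k ∈ Finset.range (n + 1), G k) ∧
    (∀ q, 0 < q → (∀ n, ∑ k ∈ Finset.range (n + q + 1), G k = ∑ k ∈ Finset.range (n + 1), G k) →
      s * p ≤ q) :=
  stmt_5_general m G p hp hper hmin s hs
end

section
/- Let F(a,b) be the generalized Fibonacci sequence modulo m with minimal period p. Then ∑_{k=0}^{p-1} F(a,b)_k = 0 in ZMod m. -/
open Finset

theorem sum_range_eq_sub_of_add_two {G : Type*} [AddCommGroup G] {F : ℕ → G}
    (hrec : ∀ n, F (n + 2) = F (n + 1) + F n) (n : ℕ) :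
    ∑ k ∈ range n, F k = F (n + 1) - F 1 := by
  have hF : ∀ k, F k = F (k + 1 + 1) - F (k + 1) := fun k => by
    rw [hrec k, add_sub_cancel_left]
  rw [sum_congr rfl fun k _ => hF k]
  exact sum_range_sub (fun k => F (k + 1)) n

theorem stmt_10_general (m : ℕ) (F : ℕ → ZMod m)
    (hrec : ∀ n, F (n + 2) = F (n + 1) + F n)
    (p : ℕ)
    (hper : ∀ n, F (n + p) = F n) :
    ∑ k ∈ Finset.range p, F k = 0 := by
  rw [sum_range_eq_sub_of_add_two hrec, add_comm, hper, sub_self]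

theorem stmt_10 (m : ℕ) (hm : 2 ≤ m) (a b : ZMod m) (F : ℕ → ZMod m)
    (hF0 : F 0 = a) (hF1 : F 1 = b)
    (hrec : ∀ n, F (n + 2) = F (n + 1) + F n)
    (p : ℕ) (hp : 0 < p)
    (hper : ∀ n, F (n + p) = F n)
    (hmin : ∀ q, 0 < q → (∀ n, F (n + q) = F n) → p ≤ q) :
    ∑ k ∈ Finset.range p, F k = 0 :=
  stmt_10_general m F hrec p hper
end

section
/- With S^i F(a,b) the i-th iterated partial sum of the generalized Fibonacci sequence over ℤ, we have S^3 F(a,b)_n = S^2 F(a,b)_{n+2} - (n+3)·a - ((n+2)(n+3)/2)·b for all n ≥ 0. -/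
/-! Summation telescopes against the Fibonacci recurrence: for any sequence `T`,
`∑_{k ≤ n} T k = T (n+2) - T 1 - ∑_{k ≤ n} δT k`, where `δT k = T (k+2) - T (k+1) - T k`
measures how far `T` is from satisfying the recurrence. The defect of the partial sums of `T`
is `T 1` plus the partial sums of `δT`, so `δF = 0`, `δ(S F) = b`, `δ(S² F) k = a + (k+2) b`,
and summing the last one gives the correction term of the theorem. -/

open Finset

section FibDefect

variable {M : Type*} [AddCommGroup M]

def fibDefect (T : ℕ → M) (k : ℕ) : M := T (k + 2) - T (k + 1) - T k

theorem sum_range_succ_eq_sub_sub_sum_fibDefect (T : ℕ → M) (n : ℕ) :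
    ∑ k ∈ range (n + 1), T k = T (n + 2) - T 1 - ∑ k ∈ range (n + 1), fibDefect T k := by
  induction n with
  | zero => simp [fibDefect]
  | succ n ih =>
    rw [sum_range_succ T, ih, sum_range_succ (fibDefect T) (n + 1), fibDefect]
    abel

theorem fibDefect_partialSums (T : ℕ → M) (k : ℕ) :
    fibDefect (fun n ↦ ∑ j ∈ range (n + 1), T j) k = T 1 + ∑ j ∈ range (k + 1), fibDefect T j := by
  rw [fibDefect, sum_range_succ _ (k + 2), sum_range_succ _ (k + 1),
    sum_range_succ_eq_sub_sub_sum_fibDefect T k]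
  abel

end FibDefect

theorem sum_range_add_one_mul_two (n : ℕ) :
    (∑ k ∈ range n, ((k : ℤ) + 1)) * 2 = n * (n + 1) := by
  induction n with
  | zero => simp
  | succ n ih =>
    rw [sum_range_succ]
    push_cast
    linear_combination ih

theorem stmt_13 (a b : ℤ) (F : ℕ → ℤ)
    (hF0 : F 0 = a) (hF1 : F 1 = b)
    (hrec : ∀ n, F (n + 2) = F (n + 1) + F n)
    (S : ℕ → ℕ → ℤ)
    (hS0 : ∀ n, S 0 n = F n)
    (hS : ∀ i n, S (i + 1) n = ∑ k ∈ Finset.range (n + 1), S i k) :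
    ∀ n : ℕ, S 3 n = S 2 (n + 2) - (n + 3) * a - ((n + 2) * (n + 3) / 2) * b := by
  have hS' : ∀ i, S (i + 1) = fun n ↦ ∑ k ∈ range (n + 1), S i k := fun i ↦ funext (hS i)
  have hS1 : S 1 1 = a + b := by simp [hS, sum_range_succ, hS0, hF0, hF1]
  have hS2 : S 2 1 = 2 * a + b := by simp [hS, sum_range_succ, hS0, hF0, hF1, two_mul, add_assoc]
  have hδF : ∀ k, fibDefect (S 0) k = 0 := fun k ↦ by simp [fibDefect, hS0, hrec]
  have hδS1 : ∀ k, fibDefect (S 1) k = b := fun k ↦ by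
    rw [hS' 0, fibDefect_partialSums, hS0, hF1]
    simp [hδF]
  have hδS2 : ∀ k, fibDefect (S 2) k = a + b + (k + 1) * b := fun k ↦ by
    rw [hS' 1, fibDefect_partialSums, hS1]
    simp only [hδS1, sum_const, card_range, nsmul_eq_mul]
    push_cast
    ring
  intro n
  have hgauss : ((n : ℤ) + 2) * (n + 3) / 2 = ∑ k ∈ range (n + 2), ((k : ℤ) + 1) := by
    apply Int.ediv_eq_of_eq_mul_left two_ne_zero
    rw [sum_range_add_one_mul_two]
    push_cast
    ring
  rw [hS, sum_range_succ_eq_sub_sub_sum_fibDefect, hS2, hgauss, sum_range_succ _ (n + 1)]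
  simp only [hδS2, sum_add_distrib, ← sum_mul, sum_const, card_range, nsmul_eq_mul]
  push_cast
  ring
end

section
/- With S^i F(a,b) the i-th iterated partial sum of the generalized Fibonacci sequence over ℤ, for all i ≥ 1 and n ≥ 0: S^i F(a,b)_n = S^{i-1} F(a,b)_{n+2} - C(n+i, i-2)·a - C(n+i, i-1)·b, where C denotes the binomial coefficient and C(n+1, -1) is interpreted as 0 for i = 1. -/
/-!
Write `a = f 0`, `b = f 1` and `D i n = S^i f (n+2) - S^(i+1) f n`. Splitting off the first two
terms of `S^(i+1) f (n+2) = ∑_{k ≤ n+2} S^i f k` and using `S^i f 0 = a`, `S^i f 1 = i a + b` gives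
`D (i+1) n = ∑_{k ≤ n} D i k + (i+1) a + b`, while the Fibonacci recurrence gives
`D 0 n = f (n+2) - ∑_{k ≤ n} f k = b`. Solving this recurrence, the coefficients of `a` and `b` are
partial sums of binomial coefficients, which the hockey-stick identity evaluates.
-/

open Finset

theorem sum_range_add_succ_choose_add_one (i n : ℕ) :
    ∑ k ∈ range (n + 1), (k + i + 1).choose i + 1 = (n + i + 2).choose (i + 1) := by
  have := Nat.sum_range_add_choose (n + 1) i
  rw [sum_range_succ'] at this
  simpa [add_right_comm _ 1 i, add_right_comm _ 1 (i + 1)] using this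

theorem sum_range_ite_choose_add (i n : ℕ) :
    ∑ k ∈ range (n + 1), (if i = 0 then 0 else (k + i + 1).choose (i - 1)) + (i + 1) =
      (n + i + 2).choose i := by
  rcases i with _ | m
  · simp
  · have := Nat.sum_range_add_choose (n + 2) m
    rw [sum_range_succ', sum_range_succ', zero_add, zero_add, Nat.choose_self, add_comm 1 m,
      Nat.choose_succ_self_right] at this
    simpa [add_right_comm _ 2 m, add_assoc, add_left_comm 2] using this

def iterPartialSum {M : Type*} [AddCommMonoid M] (f : ℕ → M) : ℕ → ℕ → M
  | 0, n => f n
  | i + 1, n => ∑ k ∈ range (n + 1), iterPartialSum f i k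

section PartialSums

variable {M : Type*} [AddCommMonoid M] (f : ℕ → M)

@[simp]
theorem iterPartialSum_zero (n : ℕ) : iterPartialSum f 0 n = f n := rfl

theorem iterPartialSum_succ (i n : ℕ) :
    iterPartialSum f (i + 1) n = ∑ k ∈ range (n + 1), iterPartialSum f i k := rfl

@[simp]
theorem iterPartialSum_apply_zero (i : ℕ) : iterPartialSum f i 0 = f 0 := by
  induction i with
  | zero => rfl
  | succ i ih => rw [iterPartialSum_succ, sum_range_one, ih]

@[simp]
theorem iterPartialSum_apply_one (i : ℕ) : iterPartialSum f i 1 = i • f 0 + f 1 := by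
  induction i with
  | zero => rw [zero_smul, zero_add, iterPartialSum_zero]
  | succ i ih =>
    rw [iterPartialSum_succ, sum_range_succ, sum_range_one, iterPartialSum_apply_zero, ih,
      succ_nsmul', add_assoc]

theorem iterPartialSum_succ_add_two (i n : ℕ) :
    iterPartialSum f (i + 1) (n + 2) =
      ∑ k ∈ range (n + 1), iterPartialSum f i (k + 2) + ((i + 1) • f 0 + f 1) := by
  rw [iterPartialSum_succ, sum_range_succ', sum_range_succ', iterPartialSum_apply_zero,
    iterPartialSum_apply_one, succ_nsmul']
  abel

end PartialSums

section AddCommGroup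

variable {M : Type*} [AddCommGroup M] (f : ℕ → M)

theorem iterPartialSum_add_two_sub_succ_succ (i n : ℕ) :
    iterPartialSum f (i + 1) (n + 2) - iterPartialSum f (i + 2) n =
      ∑ k ∈ range (n + 1), (iterPartialSum f i (k + 2) - iterPartialSum f (i + 1) k) +
        ((i + 1) • f 0 + f 1) := by
  rw [iterPartialSum_succ_add_two, sum_sub_distrib, iterPartialSum_succ f (i + 1)]
  abel

theorem sum_range_eq_sub_of_fib_rec (hf : ∀ n, f (n + 2) = f (n + 1) + f n) (n : ℕ) :
    ∑ k ∈ range (n + 1), f k = f (n + 2) - f 1 := by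
  induction n with
  | zero => rw [sum_range_one, hf 0]; abel
  | succ n ih => rw [sum_range_succ, ih, hf (n + 1)]; abel

-- The `if` is needed because `0 - 1 = 0` in `ℕ`: for `i = 0` the coefficient of `f 0` is `0`.
theorem iterPartialSum_add_two_sub_succ_of_fib_rec (hf : ∀ n, f (n + 2) = f (n + 1) + f n) (i n : ℕ) :
    iterPartialSum f i (n + 2) - iterPartialSum f (i + 1) n =
      (if i = 0 then 0 else (n + i + 1).choose (i - 1)) • f 0 +
        (n + i + 1).choose i • f 1 := by
  induction i generalizing n with
  | zero =>
    simp only [iterPartialSum_succ, iterPartialSum_zero]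
    rw [sum_range_eq_sub_of_fib_rec f hf]
    simp
  | succ i ih =>
    rw [iterPartialSum_add_two_sub_succ_succ, if_neg i.succ_ne_zero, Nat.add_sub_cancel,
      show n + (i + 1) + 1 = n + i + 2 by ring, ← sum_range_ite_choose_add,
      ← sum_range_add_succ_choose_add_one]
    simp only [ih, sum_add_distrib, add_nsmul, one_nsmul, sum_smul]
    abel

end AddCommGroup

theorem stmt_14 (a b : ℤ) (F : ℕ → ℤ)
    (hF0 : F 0 = a) (hF1 : F 1 = b)
    (hrec : ∀ n, F (n + 2) = F (n + 1) + F n)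
    (S : ℕ → ℕ → ℤ)
    (hS0 : ∀ n, S 0 n = F n)
    (hS : ∀ i n, S (i + 1) n = ∑ k ∈ Finset.range (n + 1), S i k) :
    ∀ i : ℕ, 1 ≤ i → ∀ n : ℕ,
      S i n = S (i - 1) (n + 2)
        - (if i = 1 then 0 else ((n + i).choose (i - 2) : ℤ)) * a
        - ((n + i).choose (i - 1) : ℤ) * b := by
  have hSF : S = iterPartialSum F := by
    funext i n
    induction i generalizing n with
    | zero => exact hS0 n
    | succ i ih => simp only [hS, ih, iterPartialSum_succ]
  intro i hi n
  obtain ⟨j, rfl⟩ := Nat.exists_eq_add_of_le' hi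
  have key := iterPartialSum_add_two_sub_succ_of_fib_rec F hrec j n
  have hj : j + 1 - 2 = j - 1 := by omega
  simp only [hSF, Nat.add_sub_cancel, Nat.add_eq_right, ← add_assoc, hj]
  push_cast [nsmul_eq_mul, hF0, hF1] at key
  linear_combination -key
end
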